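/- (Inverse in the triple Riordan group.) Let g, f1, f2, f3, h, h̄ be formal power series over ℚ with g supported on multiples of 3, each fᵢ supported on residue 1 mod 3, h and h̄ having zero constant coefficient, h^3 = f1*f2*f3, subst h̄ h = X, and subst h h̄ = X. Suppose G, F1, F2, F3 are power series satisfying (subst h̄ g) * G = 1 and (subst h̄ fᵢ) * Fᵢ = X * h̄ for i = 1,2,3. Then g * subst h G = 1 and fᵢ * subst h Fᵢ = X * h for i = 1,2,3; that is, the tuple (G, F1, F2, F3) = (1/g(h̄), X h̄/f1(h̄), X h̄/f2(h̄), X h̄/f3(h̄)) is a two-sided inverse of (g, f1, f2, f3), with product the identity element (1, X, X, X). -/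

import Mathlib

open PowerSeries Finset

/-- Substitution of the power series `h` (with zero constant coefficient) into `F`. -/
noncomputable def subst (h F : PowerSeries ℚ) : PowerSeries ℚ :=
  PowerSeries.mk fun n => ∑ k ∈ range (n + 1), coeff k F * coeff n (h ^ k)

/-! Substituting `h` is a ring homomorphism and `subst h ∘ subst hbar = subst (subst h hbar) = id`,
so applying it to the equations defining `G` and the `Fᵢ` yields the claimed identities. -/

lemma coeff_pow_eq_zero_of_lt {R : Type*} [CommRing R] {h : R⟦X⟧} (hh0 : constantCoeff h = 0)
    {n k : ℕ} (hnk : n < k) : coeff n (h ^ k) = 0 := by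
  have hX : (X : R⟦X⟧) ^ k ∣ h ^ k := pow_dvd_pow_of_dvd (X_dvd_iff.mpr hh0) k
  exact X_pow_dvd_iff.mp hX n hnk

/-- The terms with `k > n` vanish because `X ^ k ∣ h ^ k`, so the truncated sum is Mathlib's
substitution. -/
lemma subst_eq_subst {h : ℚ⟦X⟧} (hh0 : constantCoeff h = 0) (F : ℚ⟦X⟧) :
    _root_.subst h F = PowerSeries.subst h F := by
  ext n
  rw [_root_.subst, coeff_mk, coeff_subst' (HasSubst.of_constantCoeff_zero' hh0)]
  refine (finsum_eq_sum_of_support_subset _ fun k hk => ?_).symm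
  rw [coe_range, Set.mem_Iio, Nat.lt_succ_iff]
  by_contra! hnk
  exact hk (by simp [coeff_pow_eq_zero_of_lt hh0 hnk])

lemma subst_one {R : Type*} [CommRing R] {a : R⟦X⟧} (ha : HasSubst a) :
    PowerSeries.subst a (1 : R⟦X⟧) = 1 := by
  rw [← coe_substAlgHom ha, map_one]

lemma mul_subst_eq_subst_of_subst_mul_eq {R : Type*} [CommRing R] {a b : R⟦X⟧}
    (ha : HasSubst a) (hb : HasSubst b) (hba : PowerSeries.subst a b = X) {f F u : R⟦X⟧}
    (hfF : PowerSeries.subst b f * F = u) : f * PowerSeries.subst a F = PowerSeries.subst a u := by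
  have hf : PowerSeries.subst a (PowerSeries.subst b f) = f := by
    rw [subst_comp_subst_apply hb ha, hba, X_subst]
  rw [← hfF, subst_mul ha, hf]

theorem tripleRiordan_inverse_general
    (g f1 f2 f3 h hbar : PowerSeries ℚ)
    (hh0 : coeff 0 h = 0) (hhbar0 : coeff 0 hbar = 0)
    (hinv2 : _root_.subst h hbar = X)
    (G F1 F2 F3 : PowerSeries ℚ)
    (hG : (_root_.subst hbar g) * G = 1)
    (hF1 : (_root_.subst hbar f1) * F1 = X * hbar)
    (hF2 : (_root_.subst hbar f2) * F2 = X * hbar)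
    (hF3 : (_root_.subst hbar f3) * F3 = X * hbar) :
    g * _root_.subst h G = 1 ∧ f1 * _root_.subst h F1 = X * h ∧
      f2 * _root_.subst h F2 = X * h ∧ f3 * _root_.subst h F3 = X * h := by
  rw [coeff_zero_eq_constantCoeff_apply] at hh0 hhbar0
  have hh : HasSubst h := HasSubst.of_constantCoeff_zero' hh0
  have hhbar : HasSubst hbar := HasSubst.of_constantCoeff_zero' hhbar0
  simp only [subst_eq_subst hh0, subst_eq_subst hhbar0] at *
  have hXhbar : PowerSeries.subst h (X * hbar) = X * h := by
    rw [subst_mul hh, subst_X hh, hinv2, mul_comm]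
  have inverse_factor {f F : ℚ⟦X⟧} (hfF : PowerSeries.subst hbar f * F = X * hbar) :
      f * PowerSeries.subst h F = X * h :=
    hXhbar ▸ mul_subst_eq_subst_of_subst_mul_eq hh hhbar hinv2 hfF
  refine ⟨?_, inverse_factor hF1, inverse_factor hF2, inverse_factor hF3⟩
  exact subst_one hh ▸ mul_subst_eq_subst_of_subst_mul_eq hh hhbar hinv2 hG

theorem tripleRiordan_inverse
    (g f1 f2 f3 h hbar : PowerSeries ℚ)
    (hg : ∀ n : ℕ, n % 3 ≠ 0 → coeff n g = 0)
    (hf1 : ∀ n : ℕ, n % 3 ≠ 1 → coeff n f1 = 0)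
    (hf2 : ∀ n : ℕ, n % 3 ≠ 1 → coeff n f2 = 0)
    (hf3 : ∀ n : ℕ, n % 3 ≠ 1 → coeff n f3 = 0)
    (hh0 : coeff 0 h = 0) (hhbar0 : coeff 0 hbar = 0)
    (hh3 : h ^ 3 = f1 * f2 * f3)
    (hinv1 : _root_.subst hbar h = X) (hinv2 : _root_.subst h hbar = X)
    (G F1 F2 F3 : PowerSeries ℚ)
    (hG : (_root_.subst hbar g) * G = 1)
    (hF1 : (_root_.subst hbar f1) * F1 = X * hbar)
    (hF2 : (_root_.subst hbar f2) * F2 = X * hbar)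
    (hF3 : (_root_.subst hbar f3) * F3 = X * hbar) :
    g * _root_.subst h G = 1 ∧ f1 * _root_.subst h F1 = X * h ∧
      f2 * _root_.subst h F2 = X * h ∧ f3 * _root_.subst h F3 = X * h :=
  tripleRiordan_inverse_general g f1 f2 f3 h hbar hh0 hhbar0 hinv2 G F1 F2 F3 hG hF1 hF2 hF3
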